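/- arXiv:1701.08892 — 7 statements merged into one kernel-verified Lean document; each statement's English description precedes it below -/
import Mathlib

section
/- For any real d×d matrix A, |det(A) - 1| ≤ (dist(A, SO(d)) + 1)^d - 1, where dist(A, SO(d)) is the distance from A to the special orthogonal group in the Frobenius norm. -/
open scoped BigOperators
open Matrix

/-- The Frobenius norm of a real square matrix. -/
noncomputable def frobNorm (d : ℕ) (A : Matrix (Fin d) (Fin d) ℝ) : ℝ :=
  Real.sqrt (∑ i, ∑ j, (A i j) ^ 2)

/-- The Frobenius distance from a matrix to the special orthogonal group `SO(d)`. -/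
noncomputable def distSO (d : ℕ) (A : Matrix (Fin d) (Fin d) ℝ) : ℝ :=
  sInf {x : ℝ | ∃ R : Matrix (Fin d) (Fin d) ℝ,
    Rᵀ * R = 1 ∧ R.det = 1 ∧ x = frobNorm d (A - R)}

/-!
Write `A Rᵀ = 1 + M` with `M = (A - R) Rᵀ` for a rotation `R`. Expanding `det (1 + M)`
multilinearly in the rows and bounding each term by Hadamard's inequality gives
`|det A - 1| ≤ ∏ i, (1 + ‖Mᵢ‖) - 1`, and each row `Mᵢ = R (A - R)ᵢ` has norm at most
`‖A - R‖_F`. Letting `R` run over `SO(d)` and passing to the infimum gives the theorem.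
-/

section Hadamard

variable {𝕜 E ι : Type*} [RCLike 𝕜] [NormedAddCommGroup E] [InnerProductSpace 𝕜 E]
  [Fintype ι] [LinearOrder ι] [LocallyFiniteOrderBot ι]

/-- Hadamard's inequality. -/
theorem OrthonormalBasis.norm_det_le_prod_norm (e : OrthonormalBasis ι 𝕜 E) (v : ι → E) :
    ‖e.toBasis.det v‖ ≤ ∏ i, ‖v i‖ := by
  have : FiniteDimensional 𝕜 E := e.toBasis.finiteDimensional_of_finite
  -- In the Gram–Schmidt basis `b` of `v` the coordinate matrix of `v` is upper triangular.
  set b := InnerProductSpace.gramSchmidtOrthonormalBasis (Module.finrank_eq_card_basis e.toBasis) v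
  rw [AlternatingMap.eq_smul_basis_det b.toBasis e.toBasis.det, AlternatingMap.smul_apply,
    norm_smul, b.coe_toBasis, e.det_to_matrix_orthonormalBasis, one_mul,
    InnerProductSpace.gramSchmidtOrthonormalBasis_det, norm_prod]
  gcongr with i
  simpa [b.orthonormal.1 i] using norm_inner_le_norm (𝕜 := 𝕜) (b i) (v i)

theorem OrthonormalBasis.norm_det_add_sub_one_le (e : OrthonormalBasis ι 𝕜 E) (v : ι → E) :
    ‖e.toBasis.det (v + e) - 1‖ ≤ ∏ i, (1 + ‖v i‖) - 1 := by
  have hexpand : e.toBasis.det (v + e) = ∑ s : Finset ι, e.toBasis.det (s.piecewise v e) :=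
    e.toBasis.det.toMultilinearMap.map_add_univ _ _
  have hempty : e.toBasis.det ((∅ : Finset ι).piecewise v e) = 1 := by
    simpa using e.toBasis.det_self
  have hterm (s : Finset ι) : ‖e.toBasis.det (s.piecewise v e)‖ ≤ ∏ i ∈ s, ‖v i‖ := by
    refine (e.norm_det_le_prod_norm _).trans_eq ?_
    rw [← Finset.prod_subset (Finset.subset_univ s) fun i _ hi => by simp [hi]]
    exact Finset.prod_congr rfl fun i hi => by simp [hi]
  calc ‖e.toBasis.det (v + e) - 1‖
      = ‖∑ s ∈ Finset.univ.erase (∅ : Finset ι), e.toBasis.det (s.piecewise v e)‖ := by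
        rw [Finset.sum_erase_eq_sub (Finset.mem_univ _), hempty, hexpand]
    _ ≤ ∑ s ∈ Finset.univ.erase (∅ : Finset ι), ∏ i ∈ s, ‖v i‖ :=
        (norm_sum_le _ _).trans (Finset.sum_le_sum fun s _ => hterm s)
    _ = ∏ i, (1 + ‖v i‖) - 1 := by
        rw [Finset.sum_erase_eq_sub (Finset.mem_univ _), Finset.prod_one_add,
          Finset.powerset_univ, Finset.prod_empty]

end Hadamard

namespace Matrix

variable {𝕜 ι : Type*} [RCLike 𝕜] [Fintype ι]

theorem det_eq_basisFun_det [DecidableEq ι] (N : Matrix ι ι 𝕜) :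
    N.det = (EuclideanSpace.basisFun ι 𝕜).toBasis.det fun i => WithLp.toLp 2 (N i) := by
  rw [EuclideanSpace.basisFun_toBasis, PiLp.basisFun_eq_pi_basisFun, Module.Basis.det_map,
    Pi.basisFun_det_apply]
  rfl

theorem norm_det_add_one_sub_one_le [LinearOrder ι] [LocallyFiniteOrderBot ι]
    (M : Matrix ι ι 𝕜) :
    ‖(M + 1).det - 1‖ ≤ ∏ i, (1 + ‖WithLp.toLp 2 (M i)‖) - 1 := by
  have hrows : (fun i => WithLp.toLp 2 ((M + 1) i)) =
      (fun i => WithLp.toLp 2 (M i)) + EuclideanSpace.basisFun ι 𝕜 := by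
    ext i j
    simp [one_apply, eq_comm]
  rw [det_eq_basisFun_det, hrows]
  exact OrthonormalBasis.norm_det_add_sub_one_le _ _

theorem norm_row_sq_eq_mul_transpose_apply (X : Matrix ι ι ℝ) (i : ι) :
    ‖WithLp.toLp 2 (X i)‖ ^ 2 = (X * Xᵀ) i i := by
  rw [← real_inner_self_eq_norm_sq, EuclideanSpace.inner_toLp_toLp]
  simp [mul_apply, dotProduct]

theorem norm_row_mul_transpose_of_transpose_mul_self_eq_one [DecidableEq ι] {X R : Matrix ι ι ℝ}
    (hR : Rᵀ * R = 1) (i : ι) :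
    ‖WithLp.toLp 2 ((X * Rᵀ) i)‖ = ‖WithLp.toLp 2 (X i)‖ := by
  have hgram : X * Rᵀ * (X * Rᵀ)ᵀ = X * Xᵀ := by
    rw [transpose_mul, transpose_transpose, Matrix.mul_assoc, ← Matrix.mul_assoc Rᵀ, hR,
      Matrix.one_mul]
  refine (pow_left_inj₀ (norm_nonneg _) (norm_nonneg _) two_ne_zero).1 ?_
  rw [norm_row_sq_eq_mul_transpose_apply, norm_row_sq_eq_mul_transpose_apply, hgram]

end Matrix

theorem norm_row_le_frobNorm {d : ℕ} (M : Matrix (Fin d) (Fin d) ℝ) (i : Fin d) :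
    ‖WithLp.toLp 2 (M i)‖ ≤ frobNorm d M := by
  rw [EuclideanSpace.norm_eq, frobNorm]
  refine Real.sqrt_le_sqrt ?_
  simp only [Real.norm_eq_abs, sq_abs]
  exact Finset.single_le_sum (f := fun i => ∑ j, M i j ^ 2)
    (fun i _ => Finset.sum_nonneg fun j _ => sq_nonneg _) (Finset.mem_univ i)

theorem abs_det_sub_one_le_frobNorm_sub {d : ℕ} (A : Matrix (Fin d) (Fin d) ℝ)
    {R : Matrix (Fin d) (Fin d) ℝ} (hR : Rᵀ * R = 1) (hdet : R.det = 1) :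
    |A.det - 1| ≤ (frobNorm d (A - R) + 1) ^ d - 1 := by
  set M := (A - R) * Rᵀ with hMdef
  have hM : M + 1 = A * Rᵀ := by
    rw [hMdef, Matrix.sub_mul, mul_eq_one_comm.mp hR, sub_add_cancel]
  have hdetM : (M + 1).det = A.det := by
    rw [hM, det_mul, det_transpose, hdet, mul_one]
  calc |A.det - 1| = ‖(M + 1).det - 1‖ := by rw [hdetM, Real.norm_eq_abs]
    _ ≤ ∏ i, (1 + ‖WithLp.toLp 2 (M i)‖) - 1 := norm_det_add_one_sub_one_le M
    _ ≤ ∏ _i : Fin d, (1 + frobNorm d (A - R)) - 1 := by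
        gcongr with i
        rw [norm_row_mul_transpose_of_transpose_mul_self_eq_one hR]
        exact norm_row_le_frobNorm _ i
    _ = (frobNorm d (A - R) + 1) ^ d - 1 := by
        rw [Finset.prod_const, Finset.card_univ, Fintype.card_fin, add_comm]

/-- For any real `d×d` matrix `A`,
`|det A - 1| ≤ (dist(A, SO(d)) + 1)^d - 1`. -/
theorem abs_det_sub_one_le_dist_SO (d : ℕ) (A : Matrix (Fin d) (Fin d) ℝ) :
    |A.det - 1| ≤ (distSO d A + 1) ^ d - 1 := by
  set T := {x : ℝ | ∃ R : Matrix (Fin d) (Fin d) ℝ,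
    Rᵀ * R = 1 ∧ R.det = 1 ∧ x = frobNorm d (A - R)}
  have hne : T.Nonempty := ⟨frobNorm d (A - 1), 1, by simp, det_one, rfl⟩
  have hbdd : BddBelow T := ⟨0, by rintro _ ⟨R, -, -, rfl⟩; exact Real.sqrt_nonneg _⟩
  have hclosed : IsClosed {x : ℝ | |A.det - 1| ≤ (x + 1) ^ d - 1} :=
    isClosed_le continuous_const (by fun_prop)
  refine hclosed.closure_subset_iff.2 ?_ (csInf_mem_closure hne hbdd)
  rintro _ ⟨R, hR, hdet, rfl⟩
  exact abs_det_sub_one_le_frobNorm_sub A hR hdet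
end

section
/- For real numbers r₁,…,r_d with each r_i ∈ [0,1], the inequality ∏ r_i + ∏ (2 - r_i) ≥ 2 holds. -/
lemma aux_prod_add_prod : ∀ (d : ℕ) (r : Fin d → ℝ),
    (∀ i, r i ∈ Set.Icc (0 : ℝ) 1) →
    (∏ i, r i ≤ 1 ∧ 2 ≤ (∏ i, r i) + ∏ i, (2 - r i)) := by
  intro d
  induction d with
  | zero => intro r hr; simp; norm_num
  | succ n ih =>
    intro r hr
    obtain ⟨h0, h1⟩ := hr 0
    obtain ⟨hP, hS⟩ := ih (fun i => r i.succ) (fun i => hr i.succ)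
    have hP0 : 0 ≤ ∏ i, r (Fin.succ i) :=
      Finset.prod_nonneg fun i _ => (hr i.succ).1
    rw [Fin.prod_univ_succ, Fin.prod_univ_succ]
    set P := ∏ i, r (Fin.succ i)
    set Q := ∏ i, (2 - r (Fin.succ i))
    constructor
    · nlinarith
    · nlinarith [(1 - r 0) * (Q - 1), r 0 * (P + Q - 2)]

/-- For real numbers `r₁,…,r_d` with each `r i ∈ [0,1]`,
`∏ r_i + ∏ (2 - r_i) ≥ 2`. -/
theorem prod_add_prod_two_sub_ge_two (d : ℕ) (hd : 1 ≤ d) (r : Fin d → ℝ)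
    (hr : ∀ i, r i ∈ Set.Icc (0 : ℝ) 1) :
    2 ≤ (∏ i, r i) + ∏ i, (2 - r i) :=
  (aux_prod_add_prod d r hr).2
end

section
/- If at least one of the real numbers r₁,…,r_d is nonpositive (r₁ ≤ 0), then ∏ r_i + ∏ (|r_i - 1| + 1) ≥ 2. -/
/-- If `r₁ ≤ 0`, then `∏ r_i + ∏ (|r_i - 1| + 1) ≥ 2`. -/
theorem prod_add_prod_abs_ge_two (d : ℕ) (hd : 0 < d) (r : Fin d → ℝ)
    (h1 : r ⟨0, hd⟩ ≤ 0) :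
    2 ≤ (∏ i, r i) + ∏ i, (|r i - 1| + 1) := by
  set i₀ : Fin d := ⟨0, hd⟩
  have hsplit : ∀ (f : Fin d → ℝ),
      ∏ i, f i = f i₀ * ∏ i ∈ Finset.univ.erase i₀, f i := by
    intro f
    rw [Finset.mul_prod_erase _ _ (Finset.mem_univ i₀)]
  set S := Finset.univ.erase i₀ with hS
  have hg1 : (1:ℝ) ≤ ∏ i ∈ S, max 1 |r i| := by
    have := Finset.prod_le_prod (s := S) (f := fun _ => (1:ℝ))
      (g := fun i => max 1 |r i|) (fun i _ => zero_le_one) (fun i _ => le_max_left _ _)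
    simpa using this
  have habs_nn : (0:ℝ) ≤ ∏ i ∈ S, |r i| :=
    Finset.prod_nonneg (fun i _ => abs_nonneg _)
  have hg2 : ∏ i ∈ S, |r i| ≤ ∏ i ∈ S, max 1 |r i| :=
    Finset.prod_le_prod (fun i _ => abs_nonneg _) (fun i _ => le_max_right _ _)
  have hfg : ∏ i ∈ S, max 1 |r i| ≤ ∏ i ∈ S, (|r i - 1| + 1) := by
    apply Finset.prod_le_prod
    · intro i _
      exact le_trans zero_le_one (le_max_left _ _)
    · intro i _
      apply max_le
      · have := abs_nonneg (r i - 1); linarith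
      · have h := abs_add_le (r i - 1) 1
        have h2 : |r i - 1 + 1| = |r i| := by norm_num
        rw [h2] at h
        simpa using h
  have hf0 : |r i₀ - 1| + 1 = 2 + |r i₀| := by
    rw [abs_of_nonpos (by linarith), abs_of_nonpos h1]; ring
  have key : 2 + |∏ i, r i| ≤ ∏ i, (|r i - 1| + 1) := by
    rw [hsplit (fun i => |r i - 1| + 1), hsplit r, hf0, abs_mul, Finset.abs_prod]
    have h0 : (0:ℝ) ≤ |r i₀| := abs_nonneg _
    nlinarith [mul_le_mul_of_nonneg_left hg2 h0,
      mul_le_mul_of_nonneg_left (le_trans hg1 (le_trans (le_refl _) hfg)) h0,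
      le_trans hg1 hfg]
  have habs : -(∏ i, r i) ≤ |∏ i, r i| := neg_le_abs _
  linarith
end

section
/- Let V and W be d-dimensional oriented real inner product spaces and A : V → W linear. Then A is an orientation-preserving isometry (A ∈ SO(V,W)) if and only if Det A = 1 and Cof A = A. -/
open scoped RealInnerProductSpace
open Module Matrix

noncomputable section

variable {V W : Type*} [NormedAddCommGroup V] [InnerProductSpace ℝ V]
  [NormedAddCommGroup W] [InnerProductSpace ℝ W]

/-- The intrinsic determinant `Det A = ⋆_W^d ∘ Λ^d A ∘ ⋆_V^0` of a linear map between
`d`-dimensional oriented inner product spaces: it equals the determinant of the matrix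
of `A` with respect to (any) positively oriented orthonormal bases. -/
def IntrinsicDet {d : ℕ} (hd : 0 < d) (hV : finrank ℝ V = d) (hW : finrank ℝ W = d)
    (oV : Orientation ℝ V (Fin d)) (oW : Orientation ℝ W (Fin d)) (A : V →ₗ[ℝ] W) : ℝ :=
  (LinearMap.toMatrix (oV.finOrthonormalBasis hd hV).toBasis
    (oW.finOrthonormalBasis hd hW).toBasis A).det

/-- The intrinsic cofactor `Cof A = (-1)^{d-1} ⋆_W^{d-1} ∘ Λ^{d-1} A ∘ ⋆_V^1` of a linear map
between `d`-dimensional oriented inner product spaces: its matrix with respect to positively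
oriented orthonormal bases is the classical cofactor matrix (the transpose of the adjugate). -/
def IntrinsicCof {d : ℕ} (hd : 0 < d) (hV : finrank ℝ V = d) (hW : finrank ℝ W = d)
    (oV : Orientation ℝ V (Fin d)) (oW : Orientation ℝ W (Fin d)) (A : V →ₗ[ℝ] W) :
    V →ₗ[ℝ] W :=
  Matrix.toLin (oV.finOrthonormalBasis hd hV).toBasis (oW.finOrthonormalBasis hd hW).toBasis
    ((Matrix.adjugate (LinearMap.toMatrix (oV.finOrthonormalBasis hd hV).toBasis
      (oW.finOrthonormalBasis hd hW).toBasis A))ᵀ)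


/-- `SO(V,W)`: the set of orientation-preserving linear isometries between `d`-dimensional
oriented inner product spaces: inner-product-preserving linear maps with intrinsic
determinant `1` (for an isometry, `Det A = 1` is exactly orientation preservation). -/
def SOHom {d : ℕ} (hd : 0 < d) (hV : finrank ℝ V = d) (hW : finrank ℝ W = d)
    (oV : Orientation ℝ V (Fin d)) (oW : Orientation ℝ W (Fin d)) : Set (V →ₗ[ℝ] W) :=
  {A | (∀ v v' : V, ⟪A v, A v'⟫ = ⟪v, v'⟫) ∧ IntrinsicDet hd hV hW oV oW A = 1}

/-! In positively oriented orthonormal bases the statement becomes the matrix identity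
`Mᵀ M = 1 ↔ (adj M)ᵀ = M` for `det M = 1`, which holds because then `adj M = M⁻¹`. -/

theorem Matrix.transpose_mul_self_eq_one_iff_adjugate_transpose_eq {n R : Type*} [Fintype n]
    [DecidableEq n] [CommRing R] {M : Matrix n n R} (hM : M.det = 1) :
    Mᵀ * M = 1 ↔ M.adjugateᵀ = M := by
  have hinv : M⁻¹ = M.adjugate := by rw [inv_def, hM, Ring.inverse_one, one_smul]
  calc Mᵀ * M = 1 ↔ M⁻¹ = Mᵀ :=
        ⟨inv_eq_left_inv, fun h => h ▸ nonsing_inv_mul M (hM ▸ isUnit_one)⟩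
    _ ↔ M.adjugateᵀ = M := by rw [hinv, ← transpose_inj, transpose_transpose]

theorem LinearMap.inner_map_map_iff_adjoint_comp_self [FiniteDimensional ℝ V]
    [FiniteDimensional ℝ W] (A : V →ₗ[ℝ] W) :
    (∀ v v' : V, ⟪A v, A v'⟫ = ⟪v, v'⟫) ↔ A.adjoint ∘ₗ A = LinearMap.id := by
  refine ⟨fun h => LinearMap.ext fun v => ext_inner_right ℝ fun v' => ?_, fun h v v' => ?_⟩
  · simpa [adjoint_inner_left] using h v v'
  · rw [← adjoint_inner_left, ← comp_apply, h, id_apply]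

theorem LinearMap.inner_map_map_iff_transpose_mul_toMatrix_eq_one [FiniteDimensional ℝ V]
    [FiniteDimensional ℝ W] {ι : Type*} [Fintype ι] [DecidableEq ι]
    (b : OrthonormalBasis ι ℝ V) (c : OrthonormalBasis ι ℝ W) (A : V →ₗ[ℝ] W) :
    (∀ v v' : V, ⟪A v, A v'⟫ = ⟪v, v'⟫) ↔
      (toMatrix b.toBasis c.toBasis A)ᵀ * toMatrix b.toBasis c.toBasis A = 1 := by
  rw [inner_map_map_iff_adjoint_comp_self, ← (toMatrix b.toBasis b.toBasis).injective.eq_iff,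
    toMatrix_comp b.toBasis c.toBasis b.toBasis, toMatrix_adjoint, toMatrix_id,
    conjTranspose_eq_transpose_of_trivial]

theorem intrinsicCof_eq_self_iff {d : ℕ} (hd : 0 < d) (hV : finrank ℝ V = d)
    (hW : finrank ℝ W = d) (oV : Orientation ℝ V (Fin d)) (oW : Orientation ℝ W (Fin d))
    (A : V →ₗ[ℝ] W) :
    IntrinsicCof hd hV hW oV oW A = A ↔
      (LinearMap.toMatrix (oV.finOrthonormalBasis hd hV).toBasis
        (oW.finOrthonormalBasis hd hW).toBasis A).adjugateᵀ =
      LinearMap.toMatrix (oV.finOrthonormalBasis hd hV).toBasis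
        (oW.finOrthonormalBasis hd hW).toBasis A := by
  rw [IntrinsicCof, ← LinearMap.toMatrix_symm, LinearEquiv.symm_apply_eq, eq_comm]

/-- `A ∈ SO(V,W)` iff `Det A = 1` and `Cof A = A`. -/
theorem mem_SO_iff_det_cof [FiniteDimensional ℝ V] [FiniteDimensional ℝ W]
    {d : ℕ} (hd : 0 < d) (hV : finrank ℝ V = d) (hW : finrank ℝ W = d)
    (oV : Orientation ℝ V (Fin d)) (oW : Orientation ℝ W (Fin d)) (A : V →ₗ[ℝ] W) :
    A ∈ SOHom hd hV hW oV oW ↔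
      IntrinsicDet hd hV hW oV oW A = 1 ∧ IntrinsicCof hd hV hW oV oW A = A := by
  rw [SOHom, Set.mem_ofPred_eq, LinearMap.inner_map_map_iff_transpose_mul_toMatrix_eq_one
    (oV.finOrthonormalBasis hd hV) (oW.finOrthonormalBasis hd hW), intrinsicCof_eq_self_iff,
    and_comm]
  exact and_congr_right transpose_mul_self_eq_one_iff_adjugate_transpose_eq

end
end

section
/- For d > 2, a nonzero linear map A between d-dimensional oriented inner product spaces V and W satisfies Cof A = A if and only if A ∈ SO(V,W). -/
open scoped RealInnerProductSpace
open Module Matrix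

noncomputable section

lemma adjugate_eq_transpose_iff {d : ℕ} (hd2 : 2 < d) (M : Matrix (Fin d) (Fin d) ℝ)
    (hM : M ≠ 0) : M.adjugate = Mᵀ ↔ (Mᵀ * M = 1 ∧ M.det = 1) := by
  constructor
  · intro h
    have h1 : Mᵀ * M = M.det • (1 : Matrix (Fin d) (Fin d) ℝ) := by
      rw [← h, Matrix.adjugate_mul]
    have hdet0 : M.det ≠ 0 := by
      intro h0
      apply hM
      rw [← Matrix.conjTranspose_mul_self_eq_zero (A := M),
        Matrix.conjTranspose_eq_transpose_of_trivial, h1, h0, zero_smul]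
    have hpos : 0 < M.det := by
      have i : Fin d := ⟨0, by omega⟩
      have hge : 0 ≤ (Mᵀ * M) i i := by
        rw [Matrix.mul_apply]
        apply Finset.sum_nonneg
        intro k _
        rw [Matrix.transpose_apply]
        exact mul_self_nonneg _
      rw [h1] at hge
      simp [Matrix.smul_apply, Matrix.one_apply] at hge
      exact lt_of_le_of_ne hge (Ne.symm hdet0)
    have h2 : M.det ^ 2 = M.det ^ d := by
      have := congrArg Matrix.det h1
      rw [Matrix.det_mul, Matrix.det_transpose, Matrix.det_smul, Matrix.det_one] at this
      simpa [sq] using this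
    have h3 : M.det ^ (d - 2) = 1 := by
      have h4 : M.det ^ 2 * 1 = M.det ^ 2 * M.det ^ (d - 2) := by
        rw [mul_one, ← pow_add, h2]
        congr 1
        omega
      exact (mul_left_cancel₀ (pow_ne_zero 2 hdet0) h4).symm
    have hdet1 : M.det = 1 := by
      rcases lt_trichotomy M.det 1 with h | h | h
      · exfalso
        have := pow_lt_one₀ (le_of_lt hpos) h (by omega : d - 2 ≠ 0)
        rw [h3] at this; exact lt_irrefl 1 this
      · exact h
      · exfalso
        have := one_lt_pow₀ h (by omega : d - 2 ≠ 0)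
        rw [h3] at this; exact lt_irrefl 1 this
    refine ⟨?_, hdet1⟩
    rw [h1, hdet1, one_smul]
  · rintro ⟨horth, hdet⟩
    have hinv : M * Mᵀ = 1 := mul_eq_one_comm.mpr horth
    have h5 : M⁻¹ = Mᵀ := Matrix.inv_eq_right_inv hinv
    rw [← h5]
    simp [Matrix.inv_def, hdet]


variable {V W : Type*} [NormedAddCommGroup V] [InnerProductSpace ℝ V]
  [NormedAddCommGroup W] [InnerProductSpace ℝ W]

/-- for `d > 2`, a nonzero linear map `A` satisfies `Cof A = A` iff
`A ∈ SO(V,W)`. -/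
theorem cof_eq_self_iff_SO [FiniteDimensional ℝ V] [FiniteDimensional ℝ W]
    {d : ℕ} (hd2 : 2 < d) (hV : finrank ℝ V = d) (hW : finrank ℝ W = d)
    (oV : Orientation ℝ V (Fin d)) (oW : Orientation ℝ W (Fin d)) (A : V →ₗ[ℝ] W)
    (hA : A ≠ 0) :
    IntrinsicCof (by omega) hV hW oV oW A = A ↔
      A ∈ SOHom (by omega) hV hW oV oW := by
  have hd : 0 < d := by omega
  show IntrinsicCof hd hV hW oV oW A = A ↔ A ∈ SOHom hd hV hW oV oW
  set bV := oV.finOrthonormalBasis hd hV with hbV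
  set bW := oW.finOrthonormalBasis hd hW with hbW
  set M := LinearMap.toMatrix bV.toBasis bW.toBasis A with hM
  have hMne : M ≠ 0 := by
    intro h
    apply hA
    apply (LinearMap.toMatrix bV.toBasis bW.toBasis).injective
    rw [← hM, h, map_zero]
  have hiso : (∀ v v' : V, ⟪A v, A v'⟫ = ⟪v, v'⟫) ↔ Mᵀ * M = 1 := by
    have hadjM : LinearMap.toMatrix bW.toBasis bV.toBasis (LinearMap.adjoint A) = Mᵀ := by
      rw [LinearMap.toMatrix_adjoint bV bW, ← Matrix.conjTranspose_eq_transpose_of_trivial]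
    constructor
    · intro h
      have hadj : LinearMap.adjoint A ∘ₗ A = LinearMap.id := by
        ext v
        apply ext_inner_right ℝ
        intro w
        simp only [LinearMap.comp_apply, LinearMap.id_apply, LinearMap.adjoint_inner_left]
        rw [real_inner_comm, h, real_inner_comm]
      have := congrArg (LinearMap.toMatrix bV.toBasis bV.toBasis) hadj
      rwa [LinearMap.toMatrix_comp bV.toBasis bW.toBasis bV.toBasis, hadjM, ← hM,
        LinearMap.toMatrix_id] at this
    · intro h v v'
      have hadj : LinearMap.adjoint A ∘ₗ A = LinearMap.id := by
        apply (LinearMap.toMatrix bV.toBasis bV.toBasis).injective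
        rw [LinearMap.toMatrix_comp bV.toBasis bW.toBasis bV.toBasis, hadjM, ← hM,
          LinearMap.toMatrix_id, h]
      have h2 : (LinearMap.adjoint A) (A v') = v' := by
        have := LinearMap.ext_iff.mp hadj v'
        simpa using this
      rw [← LinearMap.adjoint_inner_right A, h2]
  have key : IntrinsicCof hd hV hW oV oW A = A ↔ M.adjugate = Mᵀ := by
    rw [← (LinearMap.toMatrix bV.toBasis bW.toBasis).injective.eq_iff]
    unfold IntrinsicCof
    rw [← hbV, ← hbW, LinearMap.toMatrix_toLin, ← hM]
    constructor
    · intro h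
      conv_rhs => rw [← h]
      rw [Matrix.transpose_transpose]
    · intro h
      rw [h, Matrix.transpose_transpose]
  have hdet : IntrinsicDet hd hV hW oV oW A = M.det := by
    unfold IntrinsicDet
    rw [← hbV, ← hbW, ← hM]
  rw [key, adjugate_eq_transpose_iff hd2 M hMne]
  simp only [SOHom, Set.mem_setOf_eq, hdet]
  rw [hiso]


end
end

section
/- Let V, W be d-dimensional oriented real inner product spaces with positively oriented bases having Gram matrices G, H, and let A be the matrix of a linear map F : V → W in these bases. Then the matrix representation of the intrinsic cofactor Cof F in these bases equals √(det H / det G) · H⁻¹ (cof A) G, where cof A is the classical matrix cofactor (the transpose of the adjugate). -/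
open scoped RealInnerProductSpace
open Module Matrix

noncomputable section

variable {V W : Type*} [NormedAddCommGroup V] [InnerProductSpace ℝ V]
  [NormedAddCommGroup W] [InnerProductSpace ℝ W]

/-- The Gram matrix of a basis of a real inner product space. -/
def gramMatrix {d : ℕ} (b : Basis (Fin d) ℝ V) : Matrix (Fin d) (Fin d) ℝ :=
  Matrix.of fun i j => ⟪b i, b j⟫

/-- The classical cofactor matrix of a square matrix (transpose of the adjugate). -/
def cofMatrix {d : ℕ} (A : Matrix (Fin d) (Fin d) ℝ) : Matrix (Fin d) (Fin d) ℝ :=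
  (Matrix.adjugate A)ᵀ

lemma adjugate_of_mul_eq_one' {d : ℕ} {M N : Matrix (Fin d) (Fin d) ℝ}
    (h2 : N * M = 1) : Matrix.adjugate M = M.det • N := by
  calc Matrix.adjugate M = (N * M) * Matrix.adjugate M := by rw [h2, one_mul]
    _ = N * (M.det • 1) := by rw [mul_assoc, Matrix.mul_adjugate]
    _ = M.det • N := by rw [Matrix.mul_smul, mul_one]

lemma gramMatrix_eq' {d : ℕ} (u : OrthonormalBasis (Fin d) ℝ V) (b : Basis (Fin d) ℝ V) :
    gramMatrix b = (u.toBasis.toMatrix b)ᵀ * (u.toBasis.toMatrix b) := by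
  ext i j
  rw [Matrix.mul_apply]
  simp only [gramMatrix, Matrix.of_apply, Matrix.transpose_apply, Basis.toMatrix_apply,
    u.coe_toBasis_repr_apply]
  rw [← u.sum_inner_mul_inner (b i) (b j)]
  congr 1; ext k
  rw [u.repr_apply_apply, u.repr_apply_apply, real_inner_comm (b i)]

/-- if `F : V → W` has matrix `A` with respect to positively oriented bases
`b`, `c` with Gram matrices `G`, `H`, then the matrix of the intrinsic cofactor `Cof F`
in these bases equals `√(det H / det G) · H⁻¹ (cof A) G`. -/
theorem toMatrix_intrinsicCof [FiniteDimensional ℝ V] [FiniteDimensional ℝ W]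
    {d : ℕ} (hd : 0 < d) (hV : finrank ℝ V = d) (hW : finrank ℝ W = d)
    (oV : Orientation ℝ V (Fin d)) (oW : Orientation ℝ W (Fin d))
    (b : Basis (Fin d) ℝ V) (c : Basis (Fin d) ℝ W)
    (hb : b.orientation = oV) (hc : c.orientation = oW) (F : V →ₗ[ℝ] W) :
    LinearMap.toMatrix b c (IntrinsicCof hd hV hW oV oW F) =
      Real.sqrt ((gramMatrix c).det / (gramMatrix b).det) •
        ((gramMatrix c)⁻¹ * cofMatrix (LinearMap.toMatrix b c F) * gramMatrix b) := by
  classical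
  set u := oV.finOrthonormalBasis hd hV with hu
  set w := oW.finOrthonormalBasis hd hW with hw
  set e := u.toBasis with he
  set f := w.toBasis with hf
  set P := e.toMatrix b with hPdef
  set Q := f.toMatrix c with hQdef
  set S := b.toMatrix e with hSdef
  set R := c.toMatrix f with hRdef
  have hPS : P * S = 1 := Basis.toMatrix_mul_toMatrix_flip e b
  have hSP : S * P = 1 := Basis.toMatrix_mul_toMatrix_flip b e
  have hQR : Q * R = 1 := Basis.toMatrix_mul_toMatrix_flip f c
  have hRQ : R * Q = 1 := Basis.toMatrix_mul_toMatrix_flip c f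
  -- determinants
  have hp : 0 < P.det := by
    rw [← Basis.det_apply, ← e.orientation_eq_iff_det_pos, hb]
    exact oV.finOrthonormalBasis_orientation hd hV
  have hq : 0 < Q.det := by
    rw [← Basis.det_apply, ← f.orientation_eq_iff_det_pos, hc]
    exact oW.finOrthonormalBasis_orientation hd hW
  have hrq : R.det * Q.det = 1 := by rw [← Matrix.det_mul, hRQ, Matrix.det_one]
  -- Gram matrices
  have hGb : gramMatrix b = Pᵀ * P := gramMatrix_eq' u b
  have hGc : gramMatrix c = Qᵀ * Q := gramMatrix_eq' w c
  -- matrix of F and of the cofactor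
  set A0 := LinearMap.toMatrix e f F with hA0
  have hA : LinearMap.toMatrix b c F = R * A0 * P := by
    rw [hA0, hRdef, hPdef, basis_toMatrix_mul_linearMap_toMatrix_mul_basis_toMatrix]
  have hLHS : LinearMap.toMatrix b c (IntrinsicCof hd hV hW oV oW F) =
      R * (Matrix.adjugate A0)ᵀ * P := by
    rw [IntrinsicCof]
    have h := basis_toMatrix_mul_linearMap_toMatrix_mul_basis_toMatrix (b := b) (b' := e)
      (c := c) (c' := f) (f := Matrix.toLin e f (Matrix.adjugate A0)ᵀ)
    rw [LinearMap.toMatrix_toLin] at h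
    exact h.symm
  -- adjugates
  have hadjP : Matrix.adjugate P = P.det • S := adjugate_of_mul_eq_one' hSP
  have hadjR : Matrix.adjugate R = R.det • Q := adjugate_of_mul_eq_one' hQR
  have hcof : cofMatrix (LinearMap.toMatrix b c F) =
      (R.det • Qᵀ) * (Matrix.adjugate A0)ᵀ * (P.det • Sᵀ) := by
    rw [cofMatrix, hA, Matrix.adjugate_mul_distrib, Matrix.adjugate_mul_distrib,
      Matrix.transpose_mul, Matrix.transpose_mul, hadjP, hadjR,
      Matrix.transpose_smul, Matrix.transpose_smul, mul_assoc]
  -- the scalar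
  have hsqrt : Real.sqrt ((gramMatrix c).det / (gramMatrix b).det) = Q.det / P.det := by
    rw [hGb, hGc, Matrix.det_mul, Matrix.det_mul, Matrix.det_transpose, Matrix.det_transpose,
      show Q.det * Q.det / (P.det * P.det) = (Q.det / P.det) ^ 2 by ring]
    exact Real.sqrt_sq (le_of_lt (div_pos hq hp))
  -- inverse of Gram matrix
  have hGcinv : (gramMatrix c)⁻¹ = R * Rᵀ := by
    apply Matrix.inv_eq_right_inv
    rw [hGc, mul_assoc, ← mul_assoc Q, hQR, one_mul, ← Matrix.transpose_mul, hRQ,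
      Matrix.transpose_one]
  rw [hLHS, hcof, hsqrt, hGcinv, hGb]
  have key : R * Rᵀ * (R.det • Qᵀ * (Matrix.adjugate A0)ᵀ * (P.det • Sᵀ)) * (Pᵀ * P) =
      (R.det * P.det) • (R * (Matrix.adjugate A0)ᵀ * P) := by
    have c1 : Rᵀ * Qᵀ = 1 := by rw [← Matrix.transpose_mul, hQR, Matrix.transpose_one]
    have c2 : Sᵀ * Pᵀ = 1 := by rw [← Matrix.transpose_mul, hPS, Matrix.transpose_one]
    simp only [Matrix.smul_mul, Matrix.mul_smul, smul_smul, mul_comm R.det P.det]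
    congr 1
    calc R * Rᵀ * (Qᵀ * (Matrix.adjugate A0)ᵀ * Sᵀ) * (Pᵀ * P)
        = R * ((Rᵀ * Qᵀ) * (Matrix.adjugate A0)ᵀ) * ((Sᵀ * Pᵀ) * P) := by
          simp only [mul_assoc]
      _ = R * (Matrix.adjugate A0)ᵀ * P := by rw [c1, c2, one_mul, one_mul, mul_assoc]
  rw [key, smul_smul]
  rw [show Q.det / P.det * (R.det * P.det) = R.det * Q.det * (P.det / P.det) by ring,
    div_self (ne_of_gt hp), mul_one, hrq, one_smul]


end
end

section
/- If a point of a strictly convex subset S of a normed space (here: the set of linear isometric embeddings O(g,e), contained in the sphere of radius √d) is the barycenter of a probability measure μ supported on S, and S lies on a sphere, then μ must be a Dirac mass at that point: explicitly, if μ is a Borel probability measure on the sphere { x : ‖x‖ = r } in a real inner product space and ∫ x dμ(x) also has norm r, then μ = δ_{∫ x dμ}. -/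
open MeasureTheory Function

/-! Inner product spaces are strictly convex, so a probability measure whose barycenter has the
largest norm allowed by the support bound must be concentrated at the barycenter. -/

theorem ae_eq_integral_of_norm_le_of_norm_integral_eq {α E : Type*} [MeasurableSpace α]
    [NormedAddCommGroup E] [NormedSpace ℝ E] [CompleteSpace E] [StrictConvexSpace ℝ E]
    {μ : Measure α} [IsProbabilityMeasure μ] {f : α → E} {C : ℝ}
    (h_le : ∀ᵐ x ∂μ, ‖f x‖ ≤ C) (h_eq : ‖∫ x, f x ∂μ‖ = C) :
    f =ᵐ[μ] const α (∫ x, f x ∂μ) := by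
  rcases ae_eq_const_or_norm_integral_lt_of_norm_le_const h_le with h | h
  · rwa [average_eq_integral] at h
  · simp [h_eq] at h

theorem MeasureTheory.Measure.eq_dirac_of_ae_eq {α : Type*} [MeasurableSpace α]
    {μ : Measure α} [IsProbabilityMeasure μ] {a : α} (h : ∀ᵐ x ∂μ, x = a) :
    μ = Measure.dirac a :=
  calc μ = μ.map id := Measure.map_id.symm
    _ = μ.map (fun _ ↦ a) := Measure.map_congr h
    _ = Measure.dirac a := by simp [Measure.map_const]

theorem measure_on_sphere_barycenter_norm_eq_dirac_general
    {H : Type*} [NormedAddCommGroup H] [InnerProductSpace ℝ H] [FiniteDimensional ℝ H]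
    [MeasurableSpace H]
    (r : ℝ) (μ : Measure H) [IsProbabilityMeasure μ]
    (hsupp : ∀ᵐ x ∂μ, ‖x‖ = r)
    (hb : ‖∫ x, x ∂μ‖ = r) :
    μ = Measure.dirac (∫ x, x ∂μ) :=
  Measure.eq_dirac_of_ae_eq <|
    ae_eq_integral_of_norm_le_of_norm_integral_eq (hsupp.mono fun _ hx ↦ hx.le) hb

/-- if a Borel probability measure `μ` on a real inner product space is
supported on the sphere of radius `r > 0` and its barycenter `∫ x dμ` also has norm `r`,
then `μ` is the Dirac mass at the barycenter. -/
theorem measure_on_sphere_barycenter_norm_eq_dirac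
    {H : Type*} [NormedAddCommGroup H] [InnerProductSpace ℝ H] [FiniteDimensional ℝ H]
    [MeasurableSpace H] [BorelSpace H]
    (r : ℝ) (hr : 0 < r) (μ : Measure H) [IsProbabilityMeasure μ]
    (hsupp : ∀ᵐ x ∂μ, ‖x‖ = r)
    (hb : ‖∫ x, x ∂μ‖ = r) :
    μ = Measure.dirac (∫ x, x ∂μ) :=
  measure_on_sphere_barycenter_norm_eq_dirac_general r μ hsupp hb
end
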